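/- Let C be a configuration, let H be a high component of C, let P be a pillar of H, and let H' be a connected component of G_{H∖P}. Then there exists a pillar P'' of H' that is also a pillar of H, such that P'' is a non-cut pillar of H' (G_{H'∖P''} is connected or empty) and a non-cut pillar of H (G_{H∖P''} is connected). -/

import Mathlib

/-- A cube is a point of `ℤ³`. -/
abbrev Cube : Type := ℤ × ℤ × ℤ

/-- Two cubes are adjacent if they lie at `L1`-distance `1`. -/
def cubeAdj (a b : Cube) : Prop :=
  (a.1 - b.1).natAbs + (a.2.1 - b.2.1).natAbs + (a.2.2 - b.2.2).natAbs = 1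

lemma cubeAdj_symm {a b : Cube} (h : cubeAdj a b) : cubeAdj b a := by
  unfold cubeAdj at h ⊢
  omega

lemma cubeAdj_irrefl (a : Cube) : ¬ cubeAdj a a := by
  unfold cubeAdj; simp

/-- The graph `G_S` on a set of cubes `S`, connecting adjacent cubes of `S`. -/
def gph (S : Finset Cube) : SimpleGraph Cube where
  Adj a b := a ∈ S ∧ b ∈ S ∧ cubeAdj a b
  symm := ⟨by
    rintro a b ⟨ha, hb, h⟩
    exact ⟨hb, ha, cubeAdj_symm h⟩⟩
  loopless := ⟨by
    rintro a ⟨-, -, h⟩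
    exact cubeAdj_irrefl a h⟩

/-- A set of cubes is connected if it is nonempty and all its cubes are joined by
paths of adjacent cubes inside the set. -/
def Conn (S : Finset Cube) : Prop :=
  S.Nonempty ∧ ∀ a ∈ S, ∀ b ∈ S, (gph S).Reachable a b

/-- Connected or empty. -/
def ConnOrEmpty (S : Finset Cube) : Prop := S = ∅ ∨ Conn S

/-- A configuration is nonnegative if all coordinates of all its cubes are `≥ 0`. -/
def Nonneg (C : Finset Cube) : Prop := ∀ c ∈ C, 0 ≤ c.1 ∧ 0 ≤ c.2.1 ∧ 0 ≤ c.2.2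

/-- `Sq4 p q r s` : the four points form a 4-cycle `p-q-r-s-p` in the unit-distance
graph on `ℤ³`. -/
def Sq4 (p q r s : Cube) : Prop :=
  cubeAdj p q ∧ cubeAdj q r ∧ cubeAdj r s ∧ cubeAdj s p ∧ p ≠ r ∧ q ≠ s

/-- Slide: there is a 4-cycle `c, c', r, s` with exactly the three vertices
other than `c'` in `C` (and `c` adjacent to `c'`). -/
def IsSlide (C : Finset Cube) (c c' : Cube) : Prop :=
  c ∈ C ∧ c' ∉ C ∧ ∃ r s, Sq4 c c' r s ∧ r ∈ C ∧ s ∈ C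

/-- Convex transition: there is a 4-cycle `c, q, c', s` with exactly two
(adjacent) vertices in `C`, one of them `c`, and `c'` opposite to `c`. -/
def IsConvexTrans (C : Finset Cube) (c c' : Cube) : Prop :=
  c ∈ C ∧ c' ∉ C ∧ ∃ q s, Sq4 c q c' s ∧ ((q ∈ C ∧ s ∉ C) ∨ (s ∈ C ∧ q ∉ C))

/-- A move replaces `c ∈ C` by `c' ∉ C` via a slide or a convex transition,
such that `C \ {c}` is connected. -/
def IsMoveVia (C : Finset Cube) (c c' : Cube) : Prop :=
  (IsSlide C c c' ∨ IsConvexTrans C c c') ∧ Conn (C.erase c)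

/-- `C'` is obtained from `C` by a single move. -/
def MoveStep (C C' : Finset Cube) : Prop :=
  ∃ c c', IsMoveVia C c c' ∧ C' = insert c' (C.erase c)

/-- `MoveSeq C m C'` : a sequence of `m` moves from `C` to `C'`, each resulting in a
connected configuration. -/
def MoveSeq (C : Finset Cube) (m : ℕ) (C' : Finset Cube) : Prop :=
  ∃ f : ℕ → Finset Cube, f 0 = C ∧ f m = C' ∧
    ∀ i < m, MoveStep (f i) (f (i + 1)) ∧ Conn (f (i + 1))

/-- Sum of `x`-coordinates of `C`. -/
def Xsum (C : Finset Cube) : ℤ := ∑ c ∈ C, c.1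

/-- Sum of `y`-coordinates of `C`. -/
def Ysum (C : Finset Cube) : ℤ := ∑ c ∈ C, c.2.1

/-- Sum of `z`-coordinates of `C`. -/
def Zsum (C : Finset Cube) : ℤ := ∑ c ∈ C, c.2.2

/-- A cube `c` is finished in `C` if the whole box spanned by the origin and `c`
is contained in `C`. -/
def FinishedCube (C : Finset Cube) (c : Cube) : Prop :=
  ∀ p : Cube, 0 ≤ p.1 → p.1 ≤ c.1 → 0 ≤ p.2.1 → p.2.1 ≤ c.2.1 →
    0 ≤ p.2.2 → p.2.2 ≤ c.2.2 → p ∈ C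

/-- A finished configuration: nonnegative and all cubes finished. -/
def FinishedConfig (C : Finset Cube) : Prop :=
  Nonneg C ∧ ∀ c ∈ C, FinishedCube C c

/-- The weight of a cube. -/
def weight (c : Cube) : ℤ :=
  if 1 < c.2.2 then 5
  else if c.2.2 = 1 then 4
  else if 1 < c.2.1 then 3
  else if c.2.1 = 1 then 2
  else 1

/-- The potential of a cube `(x, y, z)` is `w • (x + 2y + 4z)`. -/
def pot (c : Cube) : ℤ := weight c * (c.1 + 2 * c.2.1 + 4 * c.2.2)

/-- The potential of a configuration. -/
def Pot (C : Finset Cube) : ℤ := ∑ c ∈ C, pot c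

/-- `SafeSeq C K` : `C` admits a sequence of `m ≥ 1` moves, each resulting in a connected
configuration, ending in a nonnegative configuration `C'` of strictly smaller potential,
with `m ≤ K • (Π_C - Π_{C'})`. -/
def SafeSeq (C : Finset Cube) (K : ℕ) : Prop :=
  ∃ (m : ℕ) (C' : Finset Cube), 1 ≤ m ∧ MoveSeq C m C' ∧ Nonneg C' ∧
    Pot C' < Pot C ∧ (m : ℤ) ≤ (K : ℤ) * (Pot C - Pot C')

/-- The set of cubes `{x} × {y} × {z_b, …, z_t}`. -/
noncomputable def pillarSet (x y zb zt : ℤ) : Finset Cube :=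
  (Finset.Icc zb zt).image fun z => (x, y, z)

/-- `P(x,y,z_b,z_t)` is a subpillar of `S`. -/
def IsSubpillar (S : Finset Cube) (x y zb zt : ℤ) : Prop :=
  zb ≤ zt ∧ pillarSet x y zb zt ⊆ S

/-- A pillar of `S`: a maximal subpillar. -/
def IsPillar (S : Finset Cube) (x y zb zt : ℤ) : Prop :=
  IsSubpillar S x y zb zt ∧ (x, y, zb - 1) ∉ S ∧ (x, y, zt + 1) ∉ S

/-- `(x', y')` is one of the four sides of the column `(x, y)`. -/
def IsSide (x y x' y' : ℤ) : Prop :=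
  (x' = x - 1 ∧ y' = y) ∨ (x' = x + 1 ∧ y' = y) ∨
  (x' = x ∧ y' = y - 1) ∨ (x' = x ∧ y' = y + 1)

/-- `P'(x',y',z'_b,z'_t)` is a pillar of `C` lying on a side of `P(x,y,z_b,z_t)`
and adjacent to it. -/
def AdjPillar (C : Finset Cube) (x y zb zt x' y' z'b z't : ℤ) : Prop :=
  IsPillar C x' y' z'b z't ∧ IsSide x y x' y' ∧ z'b ≤ zt ∧ zb ≤ z't

/-- A cut cube of `C`: a cube whose removal disconnects `C`. -/
def IsCutCube (C : Finset Cube) (c : Cube) : Prop :=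
  c ∈ C ∧ ¬ Conn (C.erase c)

/-- Condition (a): on some side the topmost adjacent pillar
`P'` satisfies `z'_t ≤ z_t - 2`. -/
def CondA (C : Finset Cube) (x y zb zt : ℤ) : Prop :=
  ∃ x' y' z'b z't, AdjPillar C x y zb zt x' y' z'b z't ∧
    (∀ z''b z''t, AdjPillar C x y zb zt x' y' z''b z''t → z''t ≤ z't) ∧
    z't ≤ zt - 2

/-- Condition (b): some adjacent pillar `P'` has `z'_b > z_b` and
`(x, y, z'_b - 1)` is not a cut cube of `C`. -/
def CondB (C : Finset Cube) (x y zb zt : ℤ) : Prop :=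
  ∃ x' y' z'b z't, AdjPillar C x y zb zt x' y' z'b z't ∧ zb < z'b ∧
    ¬ IsCutCube C (x, y, z'b - 1)

/-- Condition (c): `(x, y, z_b - 1) ∉ C` and some adjacent pillar has `z'_b < z_b`. -/
def CondC (C : Finset Cube) (x y zb zt : ℤ) : Prop :=
  (x, y, zb - 1) ∉ C ∧
  ∃ x' y' z'b z't, AdjPillar C x y zb zt x' y' z'b z't ∧ z'b < zb

/-- Condition (d): `(x, y, z_b - 1) ∉ C` and on some side the bottommost adjacent
pillar `P'` satisfies `z'_b = z_b > 0`. -/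
def CondD (C : Finset Cube) (x y zb zt : ℤ) : Prop :=
  (x, y, zb - 1) ∉ C ∧
  ∃ x' y' z'b z't, AdjPillar C x y zb zt x' y' z'b z't ∧
    (∀ z''b z''t, AdjPillar C x y zb zt x' y' z''b z''t → z'b ≤ z''b) ∧
    z'b = zb ∧ 0 < zb

/-- Condition (e): at most one adjacent pillar on each side; there is an adjacent
pillar `P'` with `z'_b > z_b`, minimal such; and some other side `(x'', y'')` has
`(x'', y'', z_b) ∉ C`. -/
def CondE (C : Finset Cube) (x y zb zt : ℤ) : Prop :=
  (∀ x' y' z'b z't z''b z''t, AdjPillar C x y zb zt x' y' z'b z't →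
      AdjPillar C x y zb zt x' y' z''b z''t → z'b = z''b ∧ z't = z''t) ∧
  ∃ x' y' z'b z't, AdjPillar C x y zb zt x' y' z'b z't ∧ zb < z'b ∧
    (∀ x'' y'' z''b z''t, AdjPillar C x y zb zt x'' y'' z''b z''t →
      zb < z''b → z'b ≤ z''b) ∧
    ∃ x'' y'', IsSide x y x'' y'' ∧ (x'', y'') ≠ (x', y') ∧ (x'', y'', zb) ∉ C

/-- No non-cut subpillar of `C` satisfies any of the conditions (a)--(e). -/
def NoCondAE (C : Finset Cube) : Prop :=
  ∀ x y zb zt, IsSubpillar C x y zb zt →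
    ConnOrEmpty (C \ pillarSet x y zb zt) →
    ¬ (CondA C x y zb zt ∨ CondB C x y zb zt ∨ CondC C x y zb zt ∨
       CondD C x y zb zt ∨ CondE C x y zb zt)

/-- Two sets of cubes are adjacent if some cube of one is adjacent to a cube of the other. -/
def AdjSets (S T : Finset Cube) : Prop := ∃ a ∈ S, ∃ b ∈ T, cubeAdj a b

/-- The cubes of `C` with `z > 0`. -/
def Cpos (C : Finset Cube) : Finset Cube := C.filter fun c => 0 < c.2.2

/-- The cubes of `C` with `z = 0`. -/
def Czero (C : Finset Cube) : Finset Cube := C.filter fun c => c.2.2 = 0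

/-- `H` is a connected component of `G_S`: nonempty, connected and closed under
adjacency within `S`. -/
def IsCompOf (S H : Finset Cube) : Prop :=
  H ⊆ S ∧ Conn H ∧ ∀ a ∈ H, ∀ b ∈ S, cubeAdj a b → b ∈ H

/-- A high component of `C`: a connected component of `G_{C_{>0}}`. -/
def IsHighComp (C H : Finset Cube) : Prop := IsCompOf (Cpos C) H

/-- A low component of `C`: a connected component of `G_{C_0}`. -/
def IsLowComp (C L : Finset Cube) : Prop := IsCompOf (Czero C) L

/-- A move of type (f): it moves a cube with `z > 0`, strictly decreases the
potential, and results in a nonnegative configuration. -/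
def MoveTypeF (C : Finset Cube) : Prop :=
  ∃ c c', IsMoveVia C c c' ∧ 0 < c.2.2 ∧
    Nonneg (insert c' (C.erase c)) ∧ Pot (insert c' (C.erase c)) < Pot C

/-- `R` is the root: the low component containing the origin if `(0,0,0) ∈ C`,
an arbitrary low component otherwise. -/
def IsRoot (C R : Finset Cube) : Prop :=
  IsLowComp C R ∧ (((0 : ℤ), (0 : ℤ), (0 : ℤ)) ∈ C → ((0 : ℤ), (0 : ℤ), (0 : ℤ)) ∈ R)

/-- A clear low component `L` (w.r.t. root `R`): `C \ L` is connected, `L ≠ R`, and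
some pillar of `C \ L` adjacent to `L` is non-cut in `C \ L`. -/
def IsClear (C R L : Finset Cube) : Prop :=
  IsLowComp C L ∧ Conn (C \ L) ∧ L ≠ R ∧
  ∃ x y zb zt, IsPillar (C \ L) x y zb zt ∧ AdjSets (pillarSet x y zb zt) L ∧
    ConnOrEmpty ((C \ L) \ pillarSet x y zb zt)

/-- `P(x,y,z_b,z_t)` is a clearing pillar of the clear low component `L`. -/
def IsClearingPillar (C R L : Finset Cube) (x y zb zt : ℤ) : Prop :=
  IsClear C R L ∧ IsPillar (C \ L) x y zb zt ∧ AdjSets (pillarSet x y zb zt) L ∧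
    ConnOrEmpty ((C \ L) \ pillarSet x y zb zt)

/-- A move of type (g): it moves a cube of some clear low component, strictly
decreases the potential, and results in a nonnegative configuration. -/
def MoveTypeG (C R : Finset Cube) : Prop :=
  ∃ L, IsClear C R L ∧ ∃ c c', IsMoveVia C c c' ∧ c ∈ L ∧
    Nonneg (insert c' (C.erase c)) ∧ Pot (insert c' (C.erase c)) < Pot C

/-- The low-high graph `LH_C`: its vertices are the low and high components of `C`,
with edges between adjacent low and high components. -/
def LH (C : Finset Cube) : SimpleGraph (Finset Cube) where
  Adj S T := S ≠ T ∧ AdjSets S T ∧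
    ((IsLowComp C S ∧ IsHighComp C T) ∨ (IsHighComp C S ∧ IsLowComp C T))
  symm := ⟨by
    rintro S T ⟨hne, ⟨a, ha, b, hb, hab⟩, h⟩
    exact ⟨hne.symm, ⟨b, hb, a, ha, cubeAdj_symm hab⟩, h.symm.imp And.symm And.symm⟩⟩
  loopless := ⟨fun S h => h.1 rfl⟩

/-- `c` lies in the bounding box of `C`. -/
def InBBox (C : Finset Cube) (c : Cube) : Prop :=
  (∃ a ∈ C, a.1 ≤ c.1) ∧ (∃ a ∈ C, c.1 ≤ a.1) ∧
  (∃ a ∈ C, a.2.1 ≤ c.2.1) ∧ (∃ a ∈ C, c.2.1 ≤ a.2.1) ∧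
  (∃ a ∈ C, a.2.2 ≤ c.2.2) ∧ (∃ a ∈ C, c.2.2 ≤ a.2.2)

/-! ### Auxiliary lemmas for `common_non_cut_pillar` -/

lemma gph_mono {S T : Finset Cube} (h : S ⊆ T) : gph S ≤ gph T := by
  intro a b hab
  exact ⟨h hab.1, h hab.2.1, hab.2.2⟩

lemma mem_pillarSet {x y zb zt : ℤ} {c : Cube} :
    c ∈ pillarSet x y zb zt ↔ c.1 = x ∧ c.2.1 = y ∧ zb ≤ c.2.2 ∧ c.2.2 ≤ zt := by
  obtain ⟨a, b, z⟩ := c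
  simp only [pillarSet, Finset.mem_image, Finset.mem_Icc, Prod.mk.injEq]
  constructor
  · rintro ⟨w, ⟨h1, h2⟩, h3, h4, h5⟩
    subst h5; exact ⟨h3.symm, h4.symm, h1, h2⟩
  · rintro ⟨h1, h2, h3, h4⟩
    exact ⟨z, ⟨h3, h4⟩, h1.symm, h2.symm, rfl⟩

lemma cubeAdj_up (x y z : ℤ) : cubeAdj (x, y, z) (x, y, z + 1) := by
  unfold cubeAdj; simp only; omega

lemma conn_pillarSet (x y zb zt : ℤ) (h : zb ≤ zt) : Conn (pillarSet x y zb zt) := by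
  have hmem : ∀ z : ℤ, zb ≤ z → z ≤ zt → (x, y, z) ∈ pillarSet x y zb zt := by
    intro z h1 h2; exact mem_pillarSet.mpr ⟨rfl, rfl, h1, h2⟩
  have key : ∀ z : ℤ, zb ≤ z → z ≤ zt →
      (gph (pillarSet x y zb zt)).Reachable (x, y, zb) (x, y, z) := by
    refine Int.le_induction ?_ ?_
    · intro _; exact SimpleGraph.Reachable.refl _
    · intro n hn ih hle
      refine (ih (by omega)).trans (SimpleGraph.Adj.reachable ?_)
      exact ⟨hmem n hn (by omega), hmem (n + 1) (by omega) hle, cubeAdj_up x y n⟩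
  refine ⟨⟨(x, y, zb), hmem zb le_rfl h⟩, ?_⟩
  intro a ha b hb
  rw [mem_pillarSet] at ha hb
  obtain ⟨a1, a2, a3⟩ := a
  obtain ⟨b1, b2, b3⟩ := b
  simp only at ha hb
  obtain ⟨rfl, rfl, ha1, ha2⟩ := ha
  obtain ⟨rfl, rfl, hb1, hb2⟩ := hb
  exact (key a3 ha1 ha2).symm.trans (key b3 hb1 hb2)

lemma exists_pillar_through {S : Finset Cube} {c : Cube} (hc : c ∈ S) :
    ∃ zb zt, zb ≤ c.2.2 ∧ c.2.2 ≤ zt ∧ IsPillar S c.1 c.2.1 zb zt := by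
  classical
  obtain ⟨x, y, z⟩ := c
  simp only at hc ⊢
  -- downward search
  have hdown : ∃ n : ℕ, ¬ (∀ i : ℕ, i ≤ n → (x, y, z - (i : ℤ)) ∈ S) := by
    use S.card
    intro hall
    have hsub : (Finset.range (S.card + 1)).image (fun i : ℕ => ((x, y, z - (i : ℤ)) : Cube)) ⊆ S := by
      intro p hp
      simp only [Finset.mem_image, Finset.mem_range] at hp
      obtain ⟨i, hi, rfl⟩ := hp
      exact hall i (by omega)
    have hinj : Function.Injective (fun i : ℕ => ((x, y, z - (i : ℤ)) : Cube)) := by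
      intro i j hij
      simp only [Prod.mk.injEq] at hij
      omega
    have := Finset.card_le_card hsub
    rw [Finset.card_image_of_injective _ hinj, Finset.card_range] at this
    omega
  have hup : ∃ n : ℕ, ¬ (∀ i : ℕ, i ≤ n → (x, y, z + (i : ℤ)) ∈ S) := by
    use S.card
    intro hall
    have hsub : (Finset.range (S.card + 1)).image (fun i : ℕ => ((x, y, z + (i : ℤ)) : Cube)) ⊆ S := by
      intro p hp
      simp only [Finset.mem_image, Finset.mem_range] at hp
      obtain ⟨i, hi, rfl⟩ := hp
      exact hall i (by omega)
    have hinj : Function.Injective (fun i : ℕ => ((x, y, z + (i : ℤ)) : Cube)) := by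
      intro i j hij
      simp only [Prod.mk.injEq] at hij
      omega
    have := Finset.card_le_card hsub
    rw [Finset.card_image_of_injective _ hinj, Finset.card_range] at this
    omega
  set m := Nat.find hdown with hm
  set m' := Nat.find hup with hm'
  have hm0 : 0 < m := by
    rcases Nat.eq_zero_or_pos m with h0 | h
    · exfalso
      have := Nat.find_spec hdown
      rw [← hm, h0] at this
      apply this
      intro i hi
      interval_cases i
      simpa using hc
    · exact h
  have hm'0 : 0 < m' := by
    rcases Nat.eq_zero_or_pos m' with h0 | h
    · exfalso
      have := Nat.find_spec hup
      rw [← hm', h0] at this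
      apply this
      intro i hi
      interval_cases i
      simpa using hc
    · exact h
  have hall_down : ∀ i : ℕ, i ≤ m - 1 → (x, y, z - (i : ℤ)) ∈ S := by
    have := Nat.find_min hdown (show m - 1 < m by omega)
    rw [not_not] at this
    exact this
  have hall_up : ∀ i : ℕ, i ≤ m' - 1 → (x, y, z + (i : ℤ)) ∈ S := by
    have := Nat.find_min hup (show m' - 1 < m' by omega)
    rw [not_not] at this
    exact this
  have hout_down : (x, y, z - (m : ℤ)) ∉ S := by
    have hspec := Nat.find_spec hdown
    rw [← hm] at hspec
    push_neg at hspec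
    obtain ⟨i, hi, hiS⟩ := hspec
    rcases Nat.lt_or_ge i m with h | h
    · exact absurd (hall_down i (by omega)) hiS
    · have : i = m := le_antisymm hi h
      rwa [← this]
  have hout_up : (x, y, z + (m' : ℤ)) ∉ S := by
    have hspec := Nat.find_spec hup
    rw [← hm'] at hspec
    push_neg at hspec
    obtain ⟨i, hi, hiS⟩ := hspec
    rcases Nat.lt_or_ge i m' with h | h
    · exact absurd (hall_up i (by omega)) hiS
    · have : i = m' := le_antisymm hi h
      rwa [← this]
  refine ⟨z - (m : ℤ) + 1, z + (m' : ℤ) - 1, by omega, by omega, ⟨⟨by omega, ?_⟩, ?_, ?_⟩⟩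
  · intro p hp
    rw [mem_pillarSet] at hp
    obtain ⟨a, b, w⟩ := p
    simp only at hp
    obtain ⟨hpx, hpy, h1, h2⟩ := hp
    subst hpx
    subst hpy
    rcases le_total w z with hw | hw
    · have heq : ((z - w).toNat : ℤ) = z - w := Int.toNat_of_nonneg (by omega)
      have h3 := hall_down (z - w).toNat (by omega)
      rwa [heq, show z - (z - w) = w by ring] at h3
    · have heq : ((w - z).toNat : ℤ) = w - z := Int.toNat_of_nonneg (by omega)
      have h3 := hall_up (w - z).toNat (by omega)
      rwa [heq, show z + (w - z) = w by ring] at h3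
  · rwa [show z - (m : ℤ) + 1 - 1 = z - (m : ℤ) by ring]
  · rwa [show z + (m' : ℤ) - 1 + 1 = z + (m' : ℤ) by ring]

noncomputable def compOf (S : Finset Cube) (a : Cube) : Finset Cube :=
  @Finset.filter _ (fun b => (gph S).Reachable a b)
    (fun _ => Classical.propDecidable _) S

lemma mem_compOf {S : Finset Cube} {a b : Cube} :
    b ∈ compOf S a ↔ b ∈ S ∧ (gph S).Reachable a b := by
  simp [compOf, Finset.mem_filter]

lemma walk_in_comp {S : Finset Cube} {a : Cube} :
    ∀ {u v : Cube}, (gph S).Walk u v → (gph S).Reachable a u →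
      (gph (compOf S a)).Reachable u v := by
  intro u v w
  induction w with
  | nil => intro _; exact SimpleGraph.Reachable.refl _
  | @cons p q r h w ih =>
    intro hu
    have hq : (gph S).Reachable a q := hu.trans h.reachable
    refine (SimpleGraph.Adj.reachable ?_).trans (ih hq)
    exact ⟨mem_compOf.mpr ⟨h.1, hu⟩, mem_compOf.mpr ⟨h.2.1, hq⟩, h.2.2⟩

lemma compOf_isCompOf {S : Finset Cube} {a : Cube} (ha : a ∈ S) :
    IsCompOf S (compOf S a) := by
  refine ⟨fun b hb => (mem_compOf.mp hb).1, ⟨⟨a, mem_compOf.mpr ⟨ha, SimpleGraph.Reachable.refl _⟩⟩, ?_⟩, ?_⟩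
  · intro b hb c hc
    rw [mem_compOf] at hb hc
    obtain ⟨w⟩ := hb.2.symm.trans hc.2
    exact walk_in_comp w hb.2
  · intro b hb c hc hadj
    rw [mem_compOf] at hb ⊢
    exact ⟨hc, hb.2.trans (SimpleGraph.Adj.reachable ⟨hb.1, hc, hadj⟩)⟩

lemma exit_lemma {S P0 S1 : Finset Cube} (hsub : S1 ⊆ S \ P0)
    (hcl : ∀ a ∈ S1, ∀ b ∈ S \ P0, cubeAdj a b → b ∈ S1) :
    ∀ {a p : Cube}, (gph S).Walk a p → a ∈ S1 → p ∈ P0 →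
      ∃ u ∈ S1, ∃ v ∈ P0, cubeAdj u v := by
  intro a p w
  induction w with
  | nil =>
    intro ha hp
    exact absurd hp (Finset.mem_sdiff.mp (hsub ha)).2
  | @cons u v r h w ih =>
    intro ha hp
    by_cases hv : v ∈ P0
    · exact ⟨u, ha, v, hv, h.2.2⟩
    · have hv1 : v ∈ S1 := hcl u ha v (Finset.mem_sdiff.mpr ⟨h.2.1, hv⟩) h.2.2
      exact ih hv1 hp

lemma comp_adj {S P0 S1 : Finset Cube} (hS : Conn S) (hP0sub : P0 ⊆ S)
    (hP0ne : P0.Nonempty) (h1 : IsCompOf (S \ P0) S1) : AdjSets S1 P0 := by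
  obtain ⟨a, ha⟩ := h1.2.1.1
  obtain ⟨p, hp⟩ := hP0ne
  have haS : a ∈ S := (Finset.mem_sdiff.mp (h1.1 ha)).1
  obtain ⟨w⟩ := hS.2 a haS p (hP0sub hp)
  exact exit_lemma h1.1 h1.2.2 w ha hp

lemma avoid_lemma {S P0 S1 Q : Finset Cube} (hsub : S1 ⊆ S \ P0)
    (hcl : ∀ a ∈ S1, ∀ b ∈ S \ P0, cubeAdj a b → b ∈ S1) (hQ : Q ⊆ S1) :
    ∀ {c p : Cube}, (gph S).Walk c p → c ∉ P0 → c ∉ S1 → p ∈ P0 →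
      ∃ q ∈ P0, (gph (S \ Q)).Reachable c q := by
  intro c p w
  induction w with
  | nil =>
    intro h1 _ hp
    exact absurd hp h1
  | @cons u v r h w ih =>
    intro hu1 hu2 hp
    have huQ : u ∉ Q := fun hh => hu2 (hQ hh)
    have huSQ : u ∈ S \ Q := Finset.mem_sdiff.mpr ⟨h.1, huQ⟩
    by_cases hv : v ∈ P0
    · have hvQ : v ∉ Q := by
        intro hh
        exact (Finset.mem_sdiff.mp (hsub (hQ hh))).2 hv
      have hA : (gph (S \ Q)).Adj u v :=
        ⟨huSQ, Finset.mem_sdiff.mpr ⟨h.2.1, hvQ⟩, h.2.2⟩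
      exact ⟨v, hv, hA.reachable⟩
    · have hv2 : v ∉ S1 := by
        intro hh
        exact hu2 (hcl v hh u (Finset.mem_sdiff.mpr ⟨h.1, hu1⟩) (cubeAdj_symm h.2.2))
      obtain ⟨q, hq, hr⟩ := ih hv hv2 hp
      have hvQ : v ∉ Q := fun hh => hv2 (hQ hh)
      have hA : (gph (S \ Q)).Adj u v :=
        ⟨huSQ, Finset.mem_sdiff.mpr ⟨h.2.1, hvQ⟩, h.2.2⟩
      exact ⟨q, hq, hA.reachable.trans hr⟩

lemma reattach {S P0 S1 Q : Finset Cube} (hS : Conn S) (hP0sub : P0 ⊆ S)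
    (hP0conn : Conn P0) (h1 : IsCompOf (S \ P0) S1) (hQ : Q ⊆ S1)
    (hQ1 : ConnOrEmpty (S1 \ Q)) (hQ2 : S1 \ Q = ∅ ∨ AdjSets (S1 \ Q) P0) :
    Conn (S \ Q) := by
  have hQP0 : ∀ v ∈ P0, v ∉ Q := by
    intro v hv hh
    exact (Finset.mem_sdiff.mp (h1.1 (hQ hh))).2 hv
  have hP0SQ : P0 ⊆ S \ Q := fun v hv => Finset.mem_sdiff.mpr ⟨hP0sub hv, hQP0 v hv⟩
  have key : ∀ c ∈ S \ Q, ∃ q ∈ P0, (gph (S \ Q)).Reachable c q := by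
    intro c hcSQ
    obtain ⟨hcS, hcQ⟩ := Finset.mem_sdiff.mp hcSQ
    by_cases hcP0 : c ∈ P0
    · exact ⟨c, hcP0, SimpleGraph.Reachable.refl _⟩
    by_cases hc1 : c ∈ S1
    · have hcne : c ∈ S1 \ Q := Finset.mem_sdiff.mpr ⟨hc1, hcQ⟩
      have hne : (S1 \ Q).Nonempty := ⟨c, hcne⟩
      rcases hQ2 with hE | ⟨u, hu, v, hv, huv⟩
      · rw [hE] at hcne; exact absurd hcne (Finset.notMem_empty c)
      rcases hQ1 with hE | hconn
      · rw [hE] at hcne; exact absurd hcne (Finset.notMem_empty c)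
      have hsub' : S1 \ Q ⊆ S \ Q := by
        intro w hw
        obtain ⟨hw1, hw2⟩ := Finset.mem_sdiff.mp hw
        exact Finset.mem_sdiff.mpr ⟨(Finset.mem_sdiff.mp (h1.1 hw1)).1, hw2⟩
      have hr : (gph (S \ Q)).Reachable c u :=
        (hconn.2 c hcne u hu).mono (gph_mono hsub')
      refine ⟨v, hv, hr.trans (SimpleGraph.Adj.reachable ⟨hsub' hu, hP0SQ hv, huv⟩)⟩
    · obtain ⟨p, hp⟩ := hP0conn.1
      obtain ⟨w⟩ := hS.2 c hcS p (hP0sub hp)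
      exact avoid_lemma h1.1 h1.2.2 hQ w hcP0 hc1 hp
  obtain ⟨p0, hp0⟩ := hP0conn.1
  refine ⟨⟨p0, hP0SQ hp0⟩, ?_⟩
  intro a ha b hb
  obtain ⟨qa, hqa, hra⟩ := key a ha
  obtain ⟨qb, hqb, hrb⟩ := key b hb
  have hmid : (gph (S \ Q)).Reachable qa qb :=
    (hP0conn.2 qa hqa qb hqb).mono (gph_mono hP0SQ)
  exact hra.trans (hmid.trans hrb.symm)

lemma pillar_lift {S : Finset Cube} {x0 y0 zb0 zt0 : ℤ}
    (hP : IsPillar S x0 y0 zb0 zt0) {S1 : Finset Cube}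
    (h1 : IsCompOf (S \ pillarSet x0 y0 zb0 zt0) S1) {x y zb zt : ℤ}
    (hQ : IsPillar S1 x y zb zt) : IsPillar S x y zb zt := by
  have hsub1 : S1 ⊆ S \ pillarSet x0 y0 zb0 zt0 := h1.1
  have hQ1 : pillarSet x y zb zt ⊆ S1 := hQ.1.2
  refine ⟨⟨hQ.1.1, fun p hp => (Finset.mem_sdiff.mp (hsub1 (hQ1 hp))).1⟩, ?_, ?_⟩
  · intro hmem
    have hcb : (x, y, zb) ∈ S1 := hQ1 (mem_pillarSet.mpr ⟨rfl, rfl, le_rfl, hQ.1.1⟩)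
    have hcbS : (x, y, zb) ∈ S := (Finset.mem_sdiff.mp (hsub1 hcb)).1
    have hadj : cubeAdj (x, y, zb) (x, y, zb - 1) := by
      unfold cubeAdj; simp only; omega
    by_cases hin : (x, y, zb - 1) ∈ pillarSet x0 y0 zb0 zt0
    · rw [mem_pillarSet] at hin
      obtain ⟨hx, hy, h3, h4⟩ := hin
      simp only at hx hy h3 h4
      subst hx; subst hy
      have hnotP : (x, y, zb) ∉ pillarSet x y zb0 zt0 :=
        (Finset.mem_sdiff.mp (hsub1 hcb)).2
      have hnot' : ¬ (zb0 ≤ zb ∧ zb ≤ zt0) := fun hu =>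
        hnotP (mem_pillarSet.mpr ⟨rfl, rfl, hu.1, hu.2⟩)
      have hzt : zt0 + 1 = zb := by
        rcases not_and_or.mp hnot' with h | h <;> omega
      exact hP.2.2 (by rw [hzt]; exact hcbS)
    · have : (x, y, zb - 1) ∈ S1 :=
        h1.2.2 _ hcb _ (Finset.mem_sdiff.mpr ⟨hmem, hin⟩) hadj
      exact hQ.2.1 this
  · intro hmem
    have hcb : (x, y, zt) ∈ S1 := hQ1 (mem_pillarSet.mpr ⟨rfl, rfl, hQ.1.1, le_rfl⟩)
    have hcbS : (x, y, zt) ∈ S := (Finset.mem_sdiff.mp (hsub1 hcb)).1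
    have hadj : cubeAdj (x, y, zt) (x, y, zt + 1) := by
      unfold cubeAdj; simp only; omega
    by_cases hin : (x, y, zt + 1) ∈ pillarSet x0 y0 zb0 zt0
    · rw [mem_pillarSet] at hin
      obtain ⟨hx, hy, h3, h4⟩ := hin
      simp only at hx hy h3 h4
      subst hx; subst hy
      have hnotP : (x, y, zt) ∉ pillarSet x y zb0 zt0 :=
        (Finset.mem_sdiff.mp (hsub1 hcb)).2
      have hnot' : ¬ (zb0 ≤ zt ∧ zt ≤ zt0) := fun hu =>
        hnotP (mem_pillarSet.mpr ⟨rfl, rfl, hu.1, hu.2⟩)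
      have hzb : zb0 - 1 = zt := by
        rcases not_and_or.mp hnot' with h | h <;> omega
      exact hP.2.1 (by rw [hzb]; exact hcbS)
    · have : (x, y, zt + 1) ∈ S1 :=
        h1.2.2 _ hcb _ (Finset.mem_sdiff.mpr ⟨hmem, hin⟩) hadj
      exact hQ.2.2 this

lemma lemA : ∀ n : ℕ, ∀ S T : Finset Cube, S.card ≤ n → Conn S → AdjSets S T →
    ∃ x y zb zt, IsPillar S x y zb zt ∧ ConnOrEmpty (S \ pillarSet x y zb zt) ∧
      (S \ pillarSet x y zb zt = ∅ ∨ AdjSets (S \ pillarSet x y zb zt) T) := by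
  intro n
  induction n with
  | zero =>
    intro S T hc hconn _
    obtain ⟨a, ha⟩ := hconn.1
    rw [Nat.le_zero, Finset.card_eq_zero] at hc
    rw [hc] at ha
    exact absurd ha (Finset.notMem_empty a)
  | succ n ih =>
    intro S T hcard hS hadj
    obtain ⟨b, hb, t, ht, hbt⟩ := hadj
    obtain ⟨zb0, zt0, hzb0, hzt0, hP0⟩ := exists_pillar_through hb
    set P0 := pillarSet b.1 b.2.1 zb0 zt0 with hP0def
    have hbP0 : b ∈ P0 := mem_pillarSet.mpr ⟨rfl, rfl, hzb0, hzt0⟩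
    have hP0sub : P0 ⊆ S := hP0.1.2
    have hP0conn : Conn P0 := conn_pillarSet _ _ _ _ (le_trans hzb0 hzt0)
    by_cases hrest : S \ P0 = ∅
    · exact ⟨b.1, b.2.1, zb0, zt0, hP0, by rw [hrest]; exact Or.inl rfl, Or.inl hrest⟩
    · obtain ⟨a, ha⟩ := Finset.nonempty_iff_ne_empty.mpr hrest
      have hcomp := compOf_isCompOf ha
      set S1 := compOf (S \ P0) a with hS1def
      have hadj1 : AdjSets S1 P0 := comp_adj hS hP0sub ⟨b, hbP0⟩ hcomp
      have hS1card : S1.card ≤ n := by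
        have h1 : S1 ⊆ S \ P0 := hcomp.1
        have h2 : S \ P0 ⊂ S := Finset.sdiff_ssubset hP0sub ⟨b, hbP0⟩
        have := Finset.card_le_card h1
        have := Finset.card_lt_card h2
        omega
      obtain ⟨x, y, qb, qt, hQpill, hQconn, hQadj⟩ := ih S1 P0 hS1card hcomp.2.1 hadj1
      have hQS : IsPillar S x y qb qt := pillar_lift hP0 hcomp hQpill
      have hconn : Conn (S \ pillarSet x y qb qt) :=
        reattach hS hP0sub hP0conn hcomp hQpill.1.2 hQconn hQadj
      refine ⟨x, y, qb, qt, hQS, Or.inr hconn, Or.inr ⟨b, ?_, t, ht, hbt⟩⟩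
      refine Finset.mem_sdiff.mpr ⟨hb, fun hh => ?_⟩
      exact (Finset.mem_sdiff.mp (hcomp.1 (hQpill.1.2 hh))).2 hbP0
/-- Lemma 4: for a high component `H` of `C`, a pillar `P` of `H`
and a component `H'` of `G_{H∖P}`, there is a pillar of `H'` that is also a pillar
of `H` and is non-cut in both `H'` and `H`. -/
theorem common_non_cut_pillar (C H : Finset Cube) (hH : IsHighComp C H)
    (x y zb zt : ℤ) (hP : IsPillar H x y zb zt)
    (H' : Finset Cube) (hH' : IsCompOf (H \ pillarSet x y zb zt) H') :
    ∃ x'' y'' z''b z''t,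
      IsPillar H' x'' y'' z''b z''t ∧ IsPillar H x'' y'' z''b z''t ∧
      ConnOrEmpty (H' \ pillarSet x'' y'' z''b z''t) ∧
      Conn (H \ pillarSet x'' y'' z''b z''t) := by
  have hHconn : Conn H := hH.2.1
  have hPsub : pillarSet x y zb zt ⊆ H := hP.1.2
  have hPne : (pillarSet x y zb zt).Nonempty :=
    ⟨(x, y, zb), mem_pillarSet.mpr ⟨rfl, rfl, le_rfl, hP.1.1⟩⟩
  have hPconn : Conn (pillarSet x y zb zt) := conn_pillarSet _ _ _ _ hP.1.1
  have hadj : AdjSets H' (pillarSet x y zb zt) := comp_adj hHconn hPsub hPne hH'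
  obtain ⟨x'', y'', qb, qt, hQ1, hQ2, hQ3⟩ := lemA H'.card H' _ le_rfl hH'.2.1 hadj
  exact ⟨x'', y'', qb, qt, hQ1, pillar_lift hP hH' hQ1, hQ2,
    reattach hHconn hPsub hPconn hH' hQ1.1.2 hQ2 hQ3⟩
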